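/- In the free group F_X on a finite set X with |X| ≥ 1, there exists a subset S ⊆ F_X such that S⁻¹S = F_X but |S ∩ S_n| ≤ 1 for all n ∈ ℕ. In particular, if |X| > 1 such an S is not Upper Banach generic. -/

import Mathlib

open Filter Pointwise

/-- The ball of radius `n` in the free group on `X`, with respect to word length. -/
def ball (X : Type) [DecidableEq X] (n : ℕ) : Set (FreeGroup X) :=
  {w | FreeGroup.norm w ≤ n}

/-- The sphere of radius `n` in the free group on `X`. -/
def sphere (X : Type) [DecidableEq X] (n : ℕ) : Set (FreeGroup X) :=
  {w | FreeGroup.norm w = n}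

/-- The ball of radius `n` in `F_X × F_X` for the length `|(w₁,w₂)| = |w₁| + |w₂|`. -/
def ball2 (X : Type) [DecidableEq X] (n : ℕ) : Set (FreeGroup X × FreeGroup X) :=
  {p | FreeGroup.norm p.1 + FreeGroup.norm p.2 ≤ n}

/-- `(max_{ω} |S ∩ ωB_n|) / |B_n|`. -/
noncomputable def ubSeq (X : Type) [DecidableEq X] (S : Set (FreeGroup X)) (n : ℕ) : ℝ :=
  ((⨆ ω : FreeGroup X, (S ∩ ω • ball X n).ncard : ℕ) : ℝ) / ((ball X n).ncard : ℝ)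

/-- `(min_{ω} |S ∩ ωB_n|) / |B_n|`. -/
noncomputable def lbSeq (X : Type) [DecidableEq X] (S : Set (FreeGroup X)) (n : ℕ) : ℝ :=
  ((⨅ ω : FreeGroup X, (S ∩ ω • ball X n).ncard : ℕ) : ℝ) / ((ball X n).ncard : ℝ)

/-- Upper Banach density. -/
noncomputable def ubDensity (X : Type) [DecidableEq X] (S : Set (FreeGroup X)) : ℝ :=
  limsup (ubSeq X S) atTop

/-- Lower Banach density. -/
noncomputable def lbDensity (X : Type) [DecidableEq X] (S : Set (FreeGroup X)) : ℝ :=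
  liminf (lbSeq X S) atTop

/-- A set is Upper Banach generic if its upper Banach density is 1. -/
def UBGeneric (X : Type) [DecidableEq X] (S : Set (FreeGroup X)) : Prop :=
  ubDensity X S = 1

/-- A set is Lower Banach generic if its lower Banach density is 1. -/
def LBGeneric (X : Type) [DecidableEq X] (S : Set (FreeGroup X)) : Prop :=
  lbDensity X S = 1

namespace StmtAux

variable {α : Type} [DecidableEq α]

/-- Non-cancellation relation on letters. -/
def NR : (α × Bool) → (α × Bool) → Prop := fun p q => ¬(p.1 = q.1 ∧ p.2 = !q.2)

lemma reduce_eq_self_of_chain' : ∀ {L : List (α × Bool)},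
    List.Chain' NR L → FreeGroup.reduce L = L := by
  intro L
  induction L with
  | nil => intro _; rfl
  | cons x L ih =>
    intro h
    rw [FreeGroup.reduce.cons, ih h.tail]
    cases L with
    | nil => rfl
    | cons y t =>
      dsimp only
      rw [if_neg]
      exact (List.isChain_cons_cons.mp h).1

lemma chain'_of_reduce_eq_self : ∀ {L : List (α × Bool)},
    FreeGroup.reduce L = L → List.Chain' NR L := by
  intro L
  induction L with
  | nil => intro _; exact List.isChain_nil
  | cons x L ih =>
    intro h
    rw [FreeGroup.reduce.cons] at h
    cases hr : FreeGroup.reduce L with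
    | nil =>
      rw [hr] at h
      have : L = [] := by injection h with h1 h2; exact h2.symm
      subst this
      exact List.isChain_singleton x
    | cons y t =>
      rw [hr] at h
      dsimp only at h
      by_cases hc : x.1 = y.1 ∧ x.2 = !y.2
      · rw [if_pos hc] at h
        exfalso
        have h1 : (FreeGroup.reduce L).length ≤ L.length := FreeGroup.Red.length_le FreeGroup.reduce.red
        rw [hr] at h1
        have h2 := congrArg List.length h
        simp at h2 h1
        omega
      · rw [if_neg hc] at h
        have hL : L = y :: t := by injection h with _ h2; exact h2.symm
        subst hL
        exact List.isChain_cons_cons.mpr ⟨hc, ih hr⟩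

lemma chain'_replicate_append {p : α × Bool} (hp : NR p p) {L : List (α × Bool)}
    (hL : List.Chain' NR L) (hhead : ∀ q ∈ L.head?, NR p q) :
    ∀ N, List.Chain' NR (List.replicate N p ++ L)
  | 0 => hL
  | (N + 1) => by
    rw [List.replicate_succ, List.cons_append]
    refine List.isChain_cons.mpr ⟨?_, chain'_replicate_append hp hL hhead N⟩
    intro q hq
    cases N with
    | zero => exact hhead q (by simpa using hq)
    | succ N =>
      rw [List.replicate_succ, List.cons_append, List.head?_cons] at hq
      simp only [Option.mem_some_iff] at hq
      subst hq
      exact hp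

lemma norm_mk_replicate (p : α × Bool) (N : ℕ) :
    FreeGroup.norm (FreeGroup.mk (List.replicate N p)) = N := by
  show (FreeGroup.mk (List.replicate N p)).toWord.length = N
  rw [FreeGroup.toWord_mk, FreeGroup.reduce_replicate, List.length_replicate]

lemma norm_replicate_mul (g : FreeGroup α) {p : α × Bool}
    (hhead : ∀ q ∈ g.toWord.head?, q = p) (N : ℕ) :
    FreeGroup.norm (FreeGroup.mk (List.replicate N p) * g) = N + FreeGroup.norm g := by
  have hNR : NR p p := by simp [NR]
  have hmul : FreeGroup.mk (List.replicate N p) * g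
      = FreeGroup.mk (List.replicate N p ++ g.toWord) := by
    conv_lhs => rw [← FreeGroup.mk_toWord (x := g)]
    rw [FreeGroup.mul_mk]
  have hchain : List.Chain' NR (List.replicate N p ++ g.toWord) :=
    chain'_replicate_append hNR (chain'_of_reduce_eq_self (FreeGroup.reduce_toWord g))
      (fun q hq => by rw [hhead q hq]; exact hNR) N
  rw [hmul]
  show (FreeGroup.mk (List.replicate N p ++ g.toWord)).toWord.length = N + g.toWord.length
  rw [FreeGroup.toWord_mk, reduce_eq_self_of_chain' hchain, List.length_append,
    List.length_replicate]

lemma key [Nonempty α] (g : FreeGroup α) (M : ℕ) :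
    ∃ w : FreeGroup α, M < FreeGroup.norm w ∧ M < FreeGroup.norm (w * g) ∧
      (FreeGroup.norm w = FreeGroup.norm (w * g) → w = w * g) := by
  obtain ⟨a⟩ := ‹Nonempty α›
  cases hg : g.toWord with
  | nil =>
    have hg1 : g = 1 := FreeGroup.toWord_eq_nil_iff.mp hg
    subst hg1
    refine ⟨FreeGroup.mk (List.replicate (M + 1) (a, true)), ?_, ?_, fun _ => by rw [mul_one]⟩
    · rw [StmtAux.norm_mk_replicate]; omega
    · rw [mul_one, StmtAux.norm_mk_replicate]; omega
  | cons p t =>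
    have hnorm : FreeGroup.norm g = t.length + 1 := by
      show g.toWord.length = _
      rw [hg]; simp
    have hhead : ∀ q ∈ g.toWord.head?, q = p := by
      intro q hq; rw [hg] at hq; simpa [eq_comm] using hq
    refine ⟨FreeGroup.mk (List.replicate (M + 1) p), ?_, ?_, ?_⟩
    · rw [norm_mk_replicate]; omega
    · rw [norm_replicate_mul g hhead]; omega
    · rw [norm_mk_replicate, norm_replicate_mul g hhead]
      intro h; exfalso; omega

lemma exp_inj {a b : α} (hab : a ≠ b) {i j i' j' : ℕ}
    (h : FreeGroup.of a ^ i * FreeGroup.of b ^ j = FreeGroup.of a ^ i' * FreeGroup.of b ^ j') :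
    i = i' ∧ j = j' := by
  have hval : ∀ (c : α) (i j : ℕ),
      Multiplicative.toAdd ((FreeGroup.lift
        (fun x : α => Multiplicative.ofAdd (if x = c then (1 : ℤ) else 0)))
        (FreeGroup.of a ^ i * FreeGroup.of b ^ j))
      = i * (if a = c then (1 : ℤ) else 0) + j * (if b = c then (1 : ℤ) else 0) := by
    intro c i j
    simp only [map_mul, map_pow, FreeGroup.lift_apply_of, toAdd_mul, toAdd_pow, toAdd_ofAdd,
      smul_eq_mul]
    ring
  have h1 := congrArg (fun z => Multiplicative.toAdd ((FreeGroup.lift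
    (fun x : α => Multiplicative.ofAdd (if x = a then (1 : ℤ) else 0))) z)) h
  have h2 := congrArg (fun z => Multiplicative.toAdd ((FreeGroup.lift
    (fun x : α => Multiplicative.ofAdd (if x = b then (1 : ℤ) else 0))) z)) h
  rw [hval, hval] at h1 h2
  rw [if_pos rfl, if_neg (show ¬ (b = a) from Ne.symm hab)] at h1
  rw [if_pos rfl, if_neg (show ¬ (a = b) from hab)] at h2
  simp only [mul_one, mul_zero, add_zero, zero_add] at h1 h2
  exact ⟨by exact_mod_cast h1, by exact_mod_cast h2⟩

end StmtAux

set_option maxHeartbeats 1000000 in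
/-- In `F_X` (`|X| ≥ 1`) there is a subset `S` with `S⁻¹S = F_X` but `|S ∩ S_n| ≤ 1` for
all `n`; in particular if `|X| > 1` such an `S` is not Upper Banach generic. -/
theorem stmt_10 (X : Type) [Fintype X] [DecidableEq X] (hX : 1 ≤ Fintype.card X) :
    ∃ S : Set (FreeGroup X),
      (∀ g : FreeGroup X, ∃ s₁ ∈ S, ∃ s₂ ∈ S, g = s₁⁻¹ * s₂) ∧
        (∀ n : ℕ, (S ∩ sphere X n).ncard ≤ 1) ∧
          (1 < Fintype.card X → ¬ ∀ n : ℕ, ∃ ω : FreeGroup X, ω • ball X n ⊆ S) := by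
  classical
  have hNe : Nonempty X := Fintype.card_pos_iff.mp hX
  have hcount : Countable (FreeGroup X) := FreeGroup.toWord_injective.countable
  obtain ⟨e, he⟩ := exists_surjective_nat (FreeGroup X)
  choose W hW1 hW2 hW3 using fun (g : FreeGroup X) (M : ℕ) => StmtAux.key g M
  set M : ℕ → ℕ := fun k => Nat.rec 0
    (fun j Mj => max (FreeGroup.norm (W (e j) Mj)) (FreeGroup.norm (W (e j) Mj * e j))) k with hMdef
  set w : ℕ → FreeGroup X := fun k => W (e k) (M k) with hwdef
  have hMs : ∀ k, M (k + 1) = max (FreeGroup.norm (w k)) (FreeGroup.norm (w k * e k)) :=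
    fun k => rfl
  set S : Set (FreeGroup X) := Set.range w ∪ Set.range (fun k => w k * e k) with hSdef
  have hmem : ∀ s ∈ S, ∃ k, s = w k ∨ s = w k * e k := by
    rintro s (⟨k, rfl⟩ | ⟨k, rfl⟩)
    · exact ⟨k, Or.inl rfl⟩
    · exact ⟨k, Or.inr rfl⟩
  have hb : ∀ k s, (s = w k ∨ s = w k * e k) →
      M k < FreeGroup.norm s ∧ FreeGroup.norm s ≤ M (k + 1) := by
    rintro k s (rfl | rfl)
    · exact ⟨hW1 (e k) (M k), (hMs k) ▸ le_max_left _ _⟩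
    · exact ⟨hW2 (e k) (M k), (hMs k) ▸ le_max_right _ _⟩
  have hmono : StrictMono M := strictMono_nat_of_lt_succ (fun k =>
    lt_of_lt_of_le (hW1 (e k) (M k)) ((hMs k) ▸ le_max_left _ _))
  have hsame : ∀ s ∈ S, ∀ t ∈ S, FreeGroup.norm s = FreeGroup.norm t → s = t := by
    intro s hs t ht hn
    obtain ⟨j, hj⟩ := hmem s hs
    obtain ⟨k, hk⟩ := hmem t ht
    have hbj := hb j s hj
    have hbk := hb k t hk
    rcases lt_trichotomy j k with h | h | h
    · exfalso
      have : M (j + 1) ≤ M k := hmono.monotone h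
      omega
    · subst h
      rcases hj with rfl | rfl <;> rcases hk with h2 | h2 <;> rw [h2] at hn ⊢ <;>
        first
          | rfl
          | exact hW3 (e j) (M j) hn
          | exact (hW3 (e j) (M j) hn.symm).symm
    · exfalso
      have : M (k + 1) ≤ M j := hmono.monotone h
      omega
  refine ⟨S, ?_, ?_, ?_⟩
  · intro g
    obtain ⟨k, hk⟩ := he g
    refine ⟨w k, Or.inl ⟨k, rfl⟩, w k * e k, Or.inr ⟨k, rfl⟩, ?_⟩
    rw [← hk]
    exact (inv_mul_cancel_left _ _).symm
  · intro n
    have hss : (S ∩ sphere X n).Subsingleton := fun s hs t ht =>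
      hsame s hs.1 t ht.1 (hs.2.trans ht.2.symm)
    exact (Set.ncard_le_one hss.finite).mpr fun a ha b hb' => hss ha hb'
  · intro hcard hforall
    obtain ⟨ω, hω⟩ := hforall 6
    obtain ⟨a, b, hab⟩ := Fintype.exists_pair_of_one_lt_card hcard
    set u : ℕ × ℕ → FreeGroup X := fun ij => FreeGroup.of a ^ ij.1 * FreeGroup.of b ^ ij.2
      with hudef
    have hubd : ∀ ij : ℕ × ℕ, ij ∈ Finset.range 4 ×ˢ Finset.range 4 →
        FreeGroup.norm (u ij) ≤ 6 := by
      rintro ⟨i, j⟩ hij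
      simp only [Finset.mem_product, Finset.mem_range] at hij
      calc FreeGroup.norm (u (i, j)) ≤ FreeGroup.norm (FreeGroup.of a ^ i)
            + FreeGroup.norm (FreeGroup.of b ^ j) := FreeGroup.norm_mul_le _ _
        _ = i + j := by rw [FreeGroup.norm_of_pow, FreeGroup.norm_of_pow]
        _ ≤ 6 := by omega
    have hmemS : ∀ ij ∈ Finset.range 4 ×ˢ Finset.range 4, ω * u ij ∈ S := by
      intro ij hij
      apply hω
      exact ⟨u ij, hubd ij hij, rfl⟩
    -- pigeonhole
    have hpig := Finset.exists_ne_map_eq_of_card_lt_of_maps_to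
      (s := Finset.range 4 ×ˢ Finset.range 4)
      (t := Finset.Icc (FreeGroup.norm ω - 6) (FreeGroup.norm ω + 6))
      (f := fun ij => FreeGroup.norm (ω * u ij)) ?_ ?_
    · obtain ⟨ij, hij, ij', hij', hne, heq⟩ := hpig
      have hvv : ω * u ij = ω * u ij' :=
        hsame _ (hmemS ij hij) _ (hmemS ij' hij') heq
      have huu : u ij = u ij' := mul_left_cancel hvv
      have hexp := StmtAux.exp_inj hab (i := ij.1) (j := ij.2) (i' := ij'.1) (j' := ij'.2) huu
      exact hne (Prod.ext hexp.1 hexp.2)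
    · rw [Nat.card_Icc, Finset.card_product, Finset.card_range]
      omega
    · intro ij hij
      simp only [Finset.mem_coe, Finset.mem_Icc]
      have h1 : FreeGroup.norm (ω * u ij) ≤ FreeGroup.norm ω + FreeGroup.norm (u ij) :=
        FreeGroup.norm_mul_le _ _
      have h2 : FreeGroup.norm ω ≤ FreeGroup.norm (ω * u ij) + FreeGroup.norm (u ij) := by
        have := FreeGroup.norm_mul_le (ω * u ij) (u ij)⁻¹
        rw [mul_inv_cancel_right, FreeGroup.norm_inv_eq] at this
        exact this
      have h3 := hubd ij hij
      omega
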